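/- Let K be a valued difference field that is a Witt case for the prime p, with valuation ring O and residue field k. Then: (a) there is a unique sequence of maps ∂₀, ∂₁, ∂₂, … : O → O with ∂₀ = id such that for all a ∈ O and all n, σ^n(a) = ∂₀(a)^{p^n} + p·∂₁(a)^{p^{n−1}} + ⋯ + p^n·∂ₙ(a); (b) for each n, identifying W[k]/(p^{n+1}) with the ring of p-typical Witt vectors of length n+1 over k, the map O → W[k]/(p^{n+1}) sending a to (∂₀(a)¯, ∂₁(a)¯, …, ∂ₙ(a)¯) is a surjective ring homomorphism with kernel p^{n+1}·O. -/

import Mathlib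

/-!
Common definitions: three-sorted valued (difference) fields, σ-polynomials,
pc-sequences, axioms from the paper.
-/

namespace VDFPaper

universe u v w

/-- A valued field, presented as a three-sorted structure `(K, Γ, k; v, π)`.
The valuation is extended to `v : K → WithTop Γ` with `v 0 = ⊤`, and the residue
map `π : O → k` is extended to all of `K` by `0` outside the valuation ring. -/
structure ValuedField (K : Type u) (Γ : Type v) (k : Type w)
    [Field K] [AddCommGroup Γ] [LinearOrder Γ] [IsOrderedAddMonoid Γ] [Field k] where
  v : K → WithTop Γ
  π : K → k
  v_top_iff : ∀ a : K, v a = ⊤ ↔ a = 0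
  v_mul : ∀ a b : K, v (a * b) = v a + v b
  v_add : ∀ a b : K, min (v a) (v b) ≤ v (a + b)
  v_surj : ∀ γ : Γ, ∃ a : K, v a = (γ : WithTop Γ)
  π_add : ∀ a b : K, 0 ≤ v a → 0 ≤ v b → π (a + b) = π a + π b
  π_mul : ∀ a b : K, 0 ≤ v a → 0 ≤ v b → π (a * b) = π a * π b
  π_one : π 1 = 1
  π_surj : Function.Surjective π
  π_eq_zero_iff : ∀ a : K, 0 ≤ v a → (π a = 0 ↔ 0 < v a)
  π_junk : ∀ a : K, ¬ 0 ≤ v a → π a = 0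

/-- A valued difference field (satisfying Axiom 1: `v (σ a) = v a`);
`σr` is the induced automorphism of the residue field. -/
structure ValuedDiffField (K : Type u) (Γ : Type v) (k : Type w)
    [Field K] [AddCommGroup Γ] [LinearOrder Γ] [IsOrderedAddMonoid Γ] [Field k]
    extends ValuedField K Γ k where
  σ : K ≃+* K
  σr : k ≃+* k
  v_σ : ∀ a : K, v (σ a) = v a
  π_σ : ∀ a : K, π (σ a) = σr (π a)

/-- `iterEquiv s m` is the `m`-th iterate (`m : ℤ`) of the automorphism `s`. -/
def iterEquiv {R : Type*} [Mul R] [Add R] (s : R ≃+* R) : ℤ → R → R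
  | Int.ofNat m => (⇑s)^[m]
  | Int.negSucc m => (⇑s.symm)^[m + 1]

/-- Evaluation of the σ-polynomial `f(x, σ x, …, σⁿ x)` at `a`. -/
noncomputable def evalDiff {R : Type*} [CommSemiring R] (s : R → R) {n : ℕ}
    (f : MvPolynomial (Fin (n + 1)) R) (a : R) : R :=
  MvPolynomial.eval (fun i : Fin (n + 1) => s^[(i : ℕ)] a) f

/-- The Taylor coefficient `f_(i)` (Hasse derivative), characterized by
`f(x+y) = Σ_i f_(i)(x) · y^i`. -/
noncomputable def taylorCoeff {R : Type*} [CommRing R] {n : ℕ}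
    (i : Fin (n + 1) →₀ ℕ) (f : MvPolynomial (Fin (n + 1)) R) :
    MvPolynomial (Fin (n + 1)) R :=
  ∑ d ∈ f.support,
    MvPolynomial.monomial (d - i)
      ((∏ j ∈ d.support ∪ i.support, ((d j).choose (i j) : R)) * f.coeff d)

/-- Apply a (not necessarily ring-hom) map to all coefficients; used for
reduction of σ-polynomials over the valuation ring to the residue field. -/
noncomputable def mapCoeffs {R S : Type*} [CommSemiring R] [CommSemiring S]
    (π : R → S) {n : ℕ} (f : MvPolynomial (Fin (n + 1)) R) :
    MvPolynomial (Fin (n + 1)) S :=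
  ∑ d ∈ f.support, MvPolynomial.monomial d (π (f.coeff d))

/-- `|j| = j₀ + ⋯ + jₙ` for a multi-index. -/
def degSum {n : ℕ} (j : Fin (n + 1) →₀ ℕ) : ℕ := j.sum fun _ e => e

/-- The order of a σ-polynomial: the largest `i` such that `σ^i x` occurs. -/
def sigmaOrder {R : Type*} [CommSemiring R] {n : ℕ}
    (f : MvPolynomial (Fin (n + 1)) R) : ℕ :=
  f.support.sup fun d => d.support.sup fun j => (j : ℕ)

lemma sigmaOrder_le {R : Type*} [CommSemiring R] {n : ℕ}
    (f : MvPolynomial (Fin (n + 1)) R) : sigmaOrder f ≤ n :=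
  Finset.sup_le fun d _ => Finset.sup_le fun j _ => Nat.lt_succ_iff.mp j.isLt

/-- Complexity of a σ-polynomial: `(order + 1, degree in σ^order x, total degree)`
for nonconstant ones, `(0,0,0)` for constants (so constants are of lower
complexity than all nonconstant σ-polynomials, as in the paper). -/
noncomputable def sigmaComplexity {R : Type*} [CommSemiring R] {n : ℕ}
    (f : MvPolynomial (Fin (n + 1)) R) : ℕ × ℕ × ℕ :=
  if f.totalDegree = 0 then (0, 0, 0)
  else (sigmaOrder f + 1,
    MvPolynomial.degreeOf (⟨sigmaOrder f, Nat.lt_succ_of_le (sigmaOrder_le f)⟩ : Fin (n + 1)) f,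
    f.totalDegree)

/-- Lexicographic order on complexities. -/
def TripleLT (a b : ℕ × ℕ × ℕ) : Prop :=
  a.1 < b.1 ∨ (a.1 = b.1 ∧ (a.2.1 < b.2.1 ∨ (a.2.1 = b.2.1 ∧ a.2.2 < b.2.2)))

/-- `α` is σ-transcendental over the difference subfield given by `φ : E →+* F`,
where `s` is the difference operator of `F`. -/
def SigmaTranscendentalOver {E F : Type*} [Field E] [Field F]
    (φ : E →+* F) (s : F → F) (α : F) : Prop :=
  ∀ (n : ℕ) (f : MvPolynomial (Fin (n + 1)) E), f ≠ 0 →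
    evalDiff s (MvPolynomial.map φ f) α ≠ 0

/-- `g` is a minimal σ-polynomial of `α` over the difference subfield `φ : E →+* F`. -/
def IsMinimalSigmaPolyOver {E F : Type*} [Field E] [Field F]
    (φ : E →+* F) (s : F → F) {n : ℕ} (g : MvPolynomial (Fin (n + 1)) E) (α : F) : Prop :=
  g ≠ 0 ∧ evalDiff s (MvPolynomial.map φ g) α = 0 ∧
    ∀ (m : ℕ) (h : MvPolynomial (Fin (m + 1)) E), h ≠ 0 →
      TripleLT (sigmaComplexity h) (sigmaComplexity g) →
      evalDiff s (MvPolynomial.map φ h) α ≠ 0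

/-- The difference subfield `E⟨a⟩` generated over `S = E` by `a`:
the subfield generated by `S` together with all `σ^m a`, `m : ℤ`. -/
def genDiffSubfield {F : Type*} [Field F] (s : F ≃+* F) (S : Set F) (a : F) : Subfield F :=
  Subfield.closure (S ∪ Set.range fun m : ℤ => iterEquiv s m a)

/-- An embedding of valued fields (three-sorted). -/
structure ValEmbedding {K₁ Γ₁ k₁ K₂ Γ₂ k₂ : Type*}
    [Field K₁] [AddCommGroup Γ₁] [LinearOrder Γ₁] [IsOrderedAddMonoid Γ₁] [Field k₁]
    [Field K₂] [AddCommGroup Γ₂] [LinearOrder Γ₂] [IsOrderedAddMonoid Γ₂] [Field k₂]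
    (M₁ : ValuedField K₁ Γ₁ k₁) (M₂ : ValuedField K₂ Γ₂ k₂) where
  toField : K₁ →+* K₂
  toGroup : Γ₁ → Γ₂
  toGroup_add : ∀ x y : Γ₁, toGroup (x + y) = toGroup x + toGroup y
  toGroup_mono : StrictMono toGroup
  comm_v : ∀ a : K₁, M₂.v (toField a) = WithTop.map toGroup (M₁.v a)
  toRes : k₁ →+* k₂
  comm_π : ∀ a : K₁, 0 ≤ M₁.v a → M₂.π (toField a) = toRes (M₁.π a)

/-- An embedding (extension) of valued difference fields. -/
structure VDFEmbedding {K₁ Γ₁ k₁ K₂ Γ₂ k₂ : Type*}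
    [Field K₁] [AddCommGroup Γ₁] [LinearOrder Γ₁] [IsOrderedAddMonoid Γ₁] [Field k₁]
    [Field K₂] [AddCommGroup Γ₂] [LinearOrder Γ₂] [IsOrderedAddMonoid Γ₂] [Field k₂]
    (M₁ : ValuedDiffField K₁ Γ₁ k₁) (M₂ : ValuedDiffField K₂ Γ₂ k₂)
    extends ValEmbedding M₁.toValuedField M₂.toValuedField where
  comm_σ : ∀ a : K₁, toField (M₁.σ a) = M₂.σ (toField a)

/-- An extension is immediate if it induces bijections on value groups and residue fields. -/
def ValEmbedding.IsImmediate {K₁ Γ₁ k₁ K₂ Γ₂ k₂ : Type*}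
    [Field K₁] [AddCommGroup Γ₁] [LinearOrder Γ₁] [IsOrderedAddMonoid Γ₁] [Field k₁]
    [Field K₂] [AddCommGroup Γ₂] [LinearOrder Γ₂] [IsOrderedAddMonoid Γ₂] [Field k₂]
    {M₁ : ValuedField K₁ Γ₁ k₁} {M₂ : ValuedField K₂ Γ₂ k₂}
    (E : ValEmbedding M₁ M₂) : Prop :=
  Function.Surjective E.toGroup ∧ Function.Surjective E.toRes

def VDFEmbedding.IsImmediate {K₁ Γ₁ k₁ K₂ Γ₂ k₂ : Type*}
    [Field K₁] [AddCommGroup Γ₁] [LinearOrder Γ₁] [IsOrderedAddMonoid Γ₁] [Field k₁]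
    [Field K₂] [AddCommGroup Γ₂] [LinearOrder Γ₂] [IsOrderedAddMonoid Γ₂] [Field k₂]
    {M₁ : ValuedDiffField K₁ Γ₁ k₁} {M₂ : ValuedDiffField K₂ Γ₂ k₂}
    (E : VDFEmbedding M₁ M₂) : Prop :=
  E.toValEmbedding.IsImmediate

section Pc

variable {K : Type u} {Γ : Type v} {k : Type w}
variable [Field K] [AddCommGroup Γ] [LinearOrder Γ] [IsOrderedAddMonoid Γ] [Field k]

/-- A pc-sequence (pseudo-Cauchy sequence). The index type is assumed to be a
nonempty well-ordered set without greatest element where this matters. -/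
def IsPcSeq {I : Type*} [LinearOrder I] (v : K → WithTop Γ) (a : I → K) : Prop :=
  ∃ ρ₀ : I, ∀ ρ ρ' ρ'' : I, ρ₀ ≤ ρ → ρ < ρ' → ρ' < ρ'' →
    v (a ρ' - a ρ) < v (a ρ'' - a ρ')

/-- `a_ρ ⤳ x` : the sequence `a` pseudoconverges to `x`, i.e. `v (x - a_ρ)` is
eventually strictly increasing. -/
def PseudoLim {I : Type*} [LinearOrder I] (v : K → WithTop Γ) (a : I → K) (x : K) : Prop :=
  ∃ ρ₀ : I, ∀ ρ ρ' : I, ρ₀ ≤ ρ → ρ < ρ' → v (x - a ρ) < v (x - a ρ')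

/-- Two pc-sequences are equivalent: they have the same pseudolimits in every
valued field extension. -/
def PcEquiv (M : ValuedField K Γ k) {I : Type*} [LinearOrder I] (a b : I → K) : Prop :=
  ∀ (K' : Type u) (Γ' : Type v) (k' : Type w)
    [Field K'] [AddCommGroup Γ'] [LinearOrder Γ'] [IsOrderedAddMonoid Γ'] [Field k']
    (M' : ValuedField K' Γ' k') (E : ValEmbedding M M') (x : K'),
    PseudoLim M'.v (fun ρ => E.toField (a ρ)) x ↔
    PseudoLim M'.v (fun ρ => E.toField (b ρ)) x

end Pc

section Axioms

variable {K : Type u} {Γ : Type v} {k : Type w}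
variable [Field K] [AddCommGroup Γ] [LinearOrder Γ] [IsOrderedAddMonoid Γ] [Field k]

/-- Axiom 2: every value is the value of an element of the fixed field. -/
def Axiom2 (M : ValuedDiffField K Γ k) : Prop :=
  ∀ γ : Γ, ∃ a : K, M.σ a = a ∧ M.v a = (γ : WithTop Γ)

/-- Axiom 3 (a scheme about the residue difference field). -/
def Axiom3 (M : ValuedDiffField K Γ k) : Prop :=
  (∀ d : ℕ, 0 < d → ∃ y : k, (⇑M.σr)^[d] y ≠ y) ∧
  (∀ p : ℕ, p.Prime → ringChar k = p →
    ∀ d : ℤ, d ≠ 0 → ∀ e : ℕ, 0 < e → ∃ y : k, iterEquiv M.σr d y ≠ y ^ p ^ e)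

/-- Axiom 4ₙ: solvability in the residue field of inhomogeneous linear
σ̄-equations of order ≤ n. -/
def Axiom4n (M : ValuedDiffField K Γ k) (n : ℕ) : Prop :=
  ∀ α : Fin (n + 1) → k, (∃ i, α i ≠ 0) →
    ∃ y : k, 1 + ∑ i : Fin (n + 1), α i * (⇑M.σr)^[(i : ℕ)] y = 0

def Axiom4 (M : ValuedDiffField K Γ k) : Prop := ∀ n : ℕ, Axiom4n M n

/-- The Witt case for the prime `p`. -/
def WittCase (M : ValuedDiffField K Γ k) (p : ℕ) : Prop :=
  p.Prime ∧ ringChar K = 0 ∧ ringChar k = p ∧ PerfectField k ∧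
  (∃ e : Γ, 0 < e ∧ (∀ γ : Γ, 0 < γ → e ≤ γ) ∧ M.v (p : K) = (e : WithTop Γ)) ∧
  ∀ y : k, M.σr y = y ^ p

/-- Finitely ramified valued (difference) field. -/
def FinitelyRamified (M : ValuedDiffField K Γ k) : Prop :=
  ringChar K = 0 ∧ ∀ p : ℕ, p.Prime → ringChar k = p →
    {γ : Γ | 0 < γ ∧ (γ : WithTop Γ) < M.v (p : K)}.Finite

/-- Workable: Axioms 2 and 3, or Axiom 2 and a Witt case with infinite residue field. -/
def Workable (M : ValuedDiffField K Γ k) : Prop :=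
  (Axiom2 M ∧ Axiom3 M) ∨ (Axiom2 M ∧ ∃ p : ℕ, WittCase M p ∧ Infinite k)

/-- All coefficients lie in the valuation ring. -/
def CoeffsInO (M : ValuedField K Γ k) {n : ℕ} (f : MvPolynomial (Fin (n + 1)) K) : Prop :=
  ∀ d : Fin (n + 1) →₀ ℕ, 0 ≤ M.v (f.coeff d)

/-- `min_{|i| = 1} v (G_(i) (a))`. -/
noncomputable def vG1min (M : ValuedDiffField K Γ k) {n : ℕ}
    (f : MvPolynomial (Fin (n + 1)) K) (a : K) : WithTop Γ :=
  Finset.univ.inf fun i : Fin (n + 1) =>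
    M.v (evalDiff (⇑M.σ) (taylorCoeff (Finsupp.single i 1) f) a)

/-- `G` is σ-henselian at `a` (with `G` over `O` and `a ∈ O`). -/
def SigmaHenselAt (M : ValuedDiffField K Γ k) {n : ℕ}
    (f : MvPolynomial (Fin (n + 1)) K) (a : K) : Prop :=
  0 < M.v (evalDiff (⇑M.σ) f a) ∧ vG1min M f a = 0

/-- `K` is σ-henselian. -/
def SigmaHenselian (M : ValuedDiffField K Γ k) : Prop :=
  ∀ (n : ℕ) (f : MvPolynomial (Fin (n + 1)) K), CoeffsInO M.toValuedField f →
    ∀ a : K, 0 ≤ M.v a → SigmaHenselAt M f a →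
      ∃ b : K, evalDiff (⇑M.σ) f b = 0 ∧ M.v (evalDiff (⇑M.σ) f a) ≤ M.v (a - b)

/-- `(G, a)` is in σ-hensel configuration. -/
def HenselConfig (M : ValuedDiffField K Γ k) {n : ℕ}
    (f : MvPolynomial (Fin (n + 1)) K) (a : K) : Prop :=
  (∃ i : Fin (n + 1), evalDiff (⇑M.σ) (taylorCoeff (Finsupp.single i 1) f) a ≠ 0) ∧
  (evalDiff (⇑M.σ) f a = 0 ∨ ∃ γ : Γ,
    M.v (evalDiff (⇑M.σ) f a) = vG1min M f a + (γ : WithTop Γ) ∧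
    ∀ j : Fin (n + 1) →₀ ℕ, 1 < degSum j →
      M.v (evalDiff (⇑M.σ) f a) <
        M.v (evalDiff (⇑M.σ) (taylorCoeff j f) a) + degSum j • (γ : WithTop Γ))

/-- The pc-sequence `a` is of σ-algebraic type over `K`. -/
def OfSigmaAlgebraicType (M : ValuedDiffField K Γ k) {I : Type*} [LinearOrder I]
    (a : I → K) : Prop :=
  ∃ (n : ℕ) (G : MvPolynomial (Fin (n + 1)) K) (b : I → K),
    IsPcSeq M.v b ∧ PcEquiv M.toValuedField a b ∧
    PseudoLim M.v (fun ρ => evalDiff (⇑M.σ) G (b ρ)) 0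

/-- The pc-sequence `a` is of σ-transcendental type over `K`. -/
def OfSigmaTranscendentalType (M : ValuedDiffField K Γ k) {I : Type*} [LinearOrder I]
    (a : I → K) : Prop :=
  ∀ (n : ℕ) (G : MvPolynomial (Fin (n + 1)) K) (b : I → K),
    IsPcSeq M.v b → PcEquiv M.toValuedField a b →
    ¬ PseudoLim M.v (fun ρ => evalDiff (⇑M.σ) G (b ρ)) 0

/-- `G` is a minimal σ-polynomial of the pc-sequence `a` over `K`. -/
def IsMinPolyOfPcSeq (M : ValuedDiffField K Γ k) {I : Type*} [LinearOrder I]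
    (a : I → K) {n : ℕ} (G : MvPolynomial (Fin (n + 1)) K) : Prop :=
  (∃ b : I → K, IsPcSeq M.v b ∧ PcEquiv M.toValuedField a b ∧
    PseudoLim M.v (fun ρ => evalDiff (⇑M.σ) G (b ρ)) 0) ∧
  ∀ (m : ℕ) (H : MvPolynomial (Fin (m + 1)) K),
    TripleLT (sigmaComplexity H) (sigmaComplexity G) →
    ∀ b : I → K, IsPcSeq M.v b → PcEquiv M.toValuedField a b →
      ¬ PseudoLim M.v (fun ρ => evalDiff (⇑M.σ) H (b ρ)) 0

end Axioms

/-- A bundled extension of a valued field (with prescribed value-group and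
residue sorts). -/
structure ValuedFieldExt {K : Type u} {Γ : Type v} {k : Type w}
    [Field K] [AddCommGroup Γ] [LinearOrder Γ] [IsOrderedAddMonoid Γ] [Field k]
    (M : ValuedField K Γ k) (Γ' : Type v) (k' : Type w)
    [AddCommGroup Γ'] [LinearOrder Γ'] [IsOrderedAddMonoid Γ'] [Field k'] where
  carrier : Type u
  [fieldInst : Field carrier]
  str : ValuedField carrier Γ' k'
  emb : ValEmbedding M str

attribute [instance] ValuedFieldExt.fieldInst

/-- A bundled extension of a valued difference field. -/
structure VDFExt {K : Type u} {Γ : Type v} {k : Type w}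
    [Field K] [AddCommGroup Γ] [LinearOrder Γ] [IsOrderedAddMonoid Γ] [Field k]
    (M : ValuedDiffField K Γ k) (Γ' : Type v) (k' : Type w)
    [AddCommGroup Γ'] [LinearOrder Γ'] [IsOrderedAddMonoid Γ'] [Field k'] where
  carrier : Type u
  [fieldInst : Field carrier]
  str : ValuedDiffField carrier Γ' k'
  emb : VDFEmbedding M str

attribute [instance] VDFExt.fieldInst

section Max

variable {K : Type u} {Γ : Type v} {k : Type w}
variable [Field K] [AddCommGroup Γ] [LinearOrder Γ] [IsOrderedAddMonoid Γ] [Field k]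

/-- Maximal valued field: no proper immediate valued field extension. -/
def MaximalValuedField (M : ValuedField K Γ k) : Prop :=
  ¬ ∃ Ext : ValuedFieldExt M Γ k,
      Ext.emb.IsImmediate ∧ ¬ Function.Surjective Ext.emb.toField

/-- Maximal valued difference field: no proper immediate extension. -/
def MaximalVDF (M : ValuedDiffField K Γ k) : Prop :=
  ¬ ∃ Ext : VDFExt M Γ k,
      Ext.emb.IsImmediate ∧ ¬ Function.Surjective Ext.emb.toField

/-- Every element of the extension is σ-algebraic over the ground field. -/
def SigmaAlgebraicExt {Γ' : Type v} {k' : Type w}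
    [AddCommGroup Γ'] [LinearOrder Γ'] [IsOrderedAddMonoid Γ'] [Field k']
    {M : ValuedDiffField K Γ k} (Ext : VDFExt M Γ' k') : Prop :=
  ∀ x : Ext.carrier, ∃ (n : ℕ) (f : MvPolynomial (Fin (n + 1)) K), f ≠ 0 ∧
    evalDiff (⇑Ext.str.σ) (MvPolynomial.map Ext.emb.toField f) x = 0

/-- σ-algebraically maximal: no proper immediate σ-algebraic extension. -/
def SigmaAlgMaximal (M : ValuedDiffField K Γ k) : Prop :=
  ¬ ∃ Ext : VDFExt M Γ k,
      Ext.emb.IsImmediate ∧ SigmaAlgebraicExt Ext ∧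
      ¬ Function.Surjective Ext.emb.toField

/-- Complete with a discrete valuation. -/
def CompleteDiscrete (M : ValuedField K Γ k) : Prop :=
  (∃ e : Γ ≃o ℤ, ∀ x y : Γ, e (x + y) = e x + e y) ∧
  ∀ u : ℕ → K,
    (∀ γ : Γ, ∃ N : ℕ, ∀ m n : ℕ, N ≤ m → N ≤ n → m ≠ n →
      (γ : WithTop Γ) < M.v (u m - u n)) →
    ∃ x : K, ∀ γ : Γ, ∃ N : ℕ, ∀ n : ℕ, N ≤ n → (γ : WithTop Γ) < M.v (x - u n)

end Max

/-- `g` is an isomorphism of difference fields `A → A'` over `E`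
(via `φ : E → F`, `φ' : E → F'`) sending `a` to `b`; `s, s'` are the difference
operators of the ambient fields. -/
def IsDiffIsoOver {E F F' : Type*} [Field E] [Field F] [Field F']
    (φ : E →+* F) (φ' : E →+* F') (s : F → F) (s' : F' → F')
    (A : Subfield F) (A' : Subfield F') (a : F) (b : F') (g : A →+* F') : Prop :=
  (Set.range fun x : A => g x) = (A' : Set F') ∧
  (∀ (e : E) (he : φ e ∈ A), g ⟨φ e, he⟩ = φ' e) ∧
  (∀ ha : a ∈ A, g ⟨a, ha⟩ = b) ∧
  (∀ (x : A) (hx : s (x : F) ∈ A), g ⟨s (x : F), hx⟩ = s' (g x))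

/-- As `IsDiffIsoOver`, and moreover valuation-preserving. -/
def IsValDiffIsoOver {E F F' : Type*} {Γ Γ' : Type*} [Field E] [Field F] [Field F']
    [AddCommGroup Γ] [LinearOrder Γ] [IsOrderedAddMonoid Γ] [AddCommGroup Γ'] [LinearOrder Γ'] [IsOrderedAddMonoid Γ']
    (v : F → WithTop Γ) (v' : F' → WithTop Γ')
    (φ : E →+* F) (φ' : E →+* F') (s : F → F) (s' : F' → F')
    (A : Subfield F) (A' : Subfield F') (a : F) (b : F') (g : A →+* F') : Prop :=
  IsDiffIsoOver φ φ' s s' A A' a b g ∧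
  ∀ x y : A, v (x : F) ≤ v (y : F) ↔ v' (g x) ≤ v' (g y)

/-- The `D`-transform substitution: `F(x₀,…,xₙ) ↦ F(W₀(y), …, Wₙ(y))` where
`W_j(y) = y₀^{p^j} + p y₁^{p^{j-1}} + ⋯ + p^j y_j`. -/
noncomputable def Dtransform (p : ℕ) {R : Type*} [CommSemiring R] {n : ℕ}
    (F : MvPolynomial (Fin (n + 1)) R) : MvPolynomial (Fin (n + 1)) R :=
  MvPolynomial.bind₁ (fun j : Fin (n + 1) =>
    ∑ i : Fin (n + 1), if (i : ℕ) ≤ (j : ℕ) then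
      MvPolynomial.C ((p : R) ^ (i : ℕ)) * MvPolynomial.X i ^ p ^ ((j : ℕ) - (i : ℕ))
    else 0) F

/-- The initial segment of the ordinals below `lam`, used as a well-ordered
index set. -/
abbrev OrdSeg (lam : Ordinal.{0}) : Type 1 := {o : Ordinal.{0} // o < lam}


/-!
Since `p` is invertible in `K`, the ghost map identifies `W(K)` with `K^ℕ`, so there is exactly
one Witt vector over `K` with ghost components `a, σ a, σ² a, …`; its coefficients are the `∂ₙ a`,
and `a ↦ (∂ₙ a)ₙ` is a ring homomorphism `K → W(K)`. In the Witt case `σ` lifts the Frobenius of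
`O / p O = k`, so by Dwork's lemma these coefficients lie in `O` when `a` does, and reducing them
modulo `p O` gives a ring homomorphism `O → W(k)`. If its first `n + 1` coefficients vanish, every
`∂ᵢ a` is divisible by `p`, hence `p^(n+1)` divides `σⁿ a = Σ pⁱ ∂ᵢ(a)^(p^(n-i))`, which has the
same value as `a`. It is onto modulo `p^(n+1)` one coefficient at a time: in `W(k)`, multiplying
by `p^m` shifts coefficients by `m` and raises them to the `p^m`-th power, and `k` is perfect.
-/

end VDFPaper

def Subring.IsFrobeniusLift {K : Type*} [CommRing K] (O : Subring K) (p : ℕ) (φ : K →+* K) :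
    Prop :=
  ∀ x ∈ O, ∃ c ∈ O, φ x = x ^ p + p * c

namespace WittVector

variable {p : ℕ} [Fact p.Prime]

theorem ghostComponent_eq_sum {R : Type*} [CommRing R] (x : WittVector p R) (n : ℕ) :
    ghostComponent n x = ∑ i ∈ Finset.range (n + 1), (p : R) ^ i * x.coeff i ^ p ^ (n - i) := by
  rw [ghostComponent_apply, aeval_wittPolynomial]

theorem ghostComponent_map {R S : Type*} [CommRing R] [CommRing S] (f : R →+* S)
    (x : WittVector p R) (n : ℕ) : ghostComponent n (map f x) = f (ghostComponent n x) := by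
  simp only [ghostComponent_eq_sum, map_coeff, map_sum, map_mul, map_pow, map_natCast]

theorem surjective_truncate_comp {k A : Type*} [CommRing k] [CharP k p] [PerfectRing k p]
    [CommRing A] (f : A →+* WittVector p k) (hf : Function.Surjective fun a => (f a).coeff 0)
    (n : ℕ) : Function.Surjective ((truncate n).comp f) := by
  intro t
  obtain ⟨x, rfl⟩ := truncate_surjective p n k t
  simp only [RingHom.comp_apply]
  induction n with
  | zero => exact ⟨0, TruncatedWittVector.ext fun i => i.elim0⟩
  | succ m ih =>
  obtain ⟨a, ha⟩ := ih
  set d := x - f a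
  have hd : ∀ i < m, d.coeff i = 0 := by
    rw [← mem_ker_truncate, RingHom.mem_ker, map_sub, ha, sub_self]
  obtain ⟨y, hy⟩ := (bijective_iterateFrobenius k p m).2 (d.coeff m)
  obtain ⟨u, hu⟩ := hf y
  -- Adding `u p^m` to `a` corrects the `m`-th coefficient without touching the earlier ones.
  have hcorr : truncate (m + 1) d = truncate (m + 1) (f u * (p : WittVector p k) ^ m) := by
    ext i
    rw [coeff_truncate, coeff_truncate]
    rcases (Nat.lt_succ_iff.mp i.2).lt_or_eq with hi | hi
    · rw [hd i hi, mul_pow_charP_coeff_zero _ hi]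
    · have htop := mul_pow_charP_coeff_succ (f u) (m := 0) (n := m)
      rw [zero_add] at htop
      rw [hi, htop, ← hy, iterateFrobenius_def, ← hu]
  refine ⟨a + u * p ^ m, ?_⟩
  rw [map_add, map_mul, map_pow, map_natCast, map_add, ← hcorr, ← map_add, add_sub_cancel]

section DworkLift

variable (p) {K : Type*} [CommRing K] [Invertible (p : K)]

noncomputable def dworkLift (φ : K →+* K) : K →+* WittVector p K :=
  (ghostEquiv p K).symm.toRingHom.comp (RingHom.pi fun n => φ ^ n)

variable {p}

theorem ghostComponent_eq_iff_eq_dworkLift {φ : K →+* K} {a : K} {w : WittVector p K} :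
    (∀ n, ghostComponent n w = φ^[n] a) ↔ w = dworkLift p φ a := by
  rw [← (ghostEquiv p K).injective.eq_iff, dworkLift, RingHom.comp_apply,
    RingEquiv.toRingHom_eq_coe, RingEquiv.coe_toRingHom, RingEquiv.apply_symm_apply, funext_iff]
  exact forall_congr' fun n => by rw [← RingHom.coe_pow]; rfl

theorem ghostComponent_dworkLift (φ : K →+* K) (a : K) (n : ℕ) :
    ghostComponent n (dworkLift p φ a) = φ^[n] a :=
  ghostComponent_eq_iff_eq_dworkLift.2 rfl n

theorem dworkLift_coeff_zero (φ : K →+* K) (a : K) : (dworkLift p φ a).coeff 0 = a := by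
  simpa [ghostComponent_eq_sum] using ghostComponent_dworkLift (p := p) φ a 0

theorem dworkLift_coeff_mem (O : Subring K) {φ : K →+* K} (hφ : O.IsFrobeniusLift p φ)
    {a : K} (ha : a ∈ O) (n : ℕ) : (dworkLift p φ a).coeff n ∈ O := by
  set x := (dworkLift p φ a).coeff
  have hghost (n : ℕ) : ∑ i ∈ Finset.range (n + 1), (p : K) ^ i * x i ^ p ^ (n - i) = φ^[n] a := by
    rw [← ghostComponent_eq_sum, ghostComponent_dworkLift]
  have hφO {y : K} (hy : y ∈ O) : φ y ∈ O := by
    obtain ⟨c, hc, hφc⟩ := hφ y hy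
    exact hφc ▸ O.add_mem (O.pow_mem hy p) (O.mul_mem (natCast_mem O p) hc)
  induction n using Nat.strong_induction_on with
  | _ n IH =>
  rcases n with _ | n
  · simpa only [x, dworkLift_coeff_zero] using ha
  have hx (i : Fin (n + 1)) : x i ∈ O := IH i (by omega)
  have hφsum : ∑ i : Fin (n + 1), (p : K) ^ (i : ℕ) * φ (x i) ^ p ^ (n - i) = φ^[n + 1] a := by
    rw [Function.iterate_succ_apply', ← hghost n, map_sum, ← Fin.sum_univ_eq_sum_range]
    simp only [map_mul, map_pow, map_natCast]
  have hghost_succ : ∑ i : Fin (n + 1), (p : K) ^ (i : ℕ) * (x i ^ p) ^ p ^ (n - i) +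
      p ^ (n + 1) * x (n + 1) = φ^[n + 1] a := by
    rw [← hghost (n + 1), Finset.sum_range_succ, ← Fin.sum_univ_eq_sum_range, Nat.sub_self,
      pow_zero, pow_one]
    congr 1
    refine Finset.sum_congr rfl fun i _ => ?_
    rw [← pow_mul, ← pow_succ', Nat.sub_add_comm (by omega)]
  -- Subtracting the two expressions for `φ^[n+1] a`, this sum is `p^(n+1) x_{n+1}`.
  obtain ⟨c, hc⟩ : (p : O) ^ (n + 1) ∣ ∑ i : Fin (n + 1), (p : O) ^ (i : ℕ) *
      (⟨φ (x i), hφO (hx i)⟩ ^ p ^ (n - i) - (⟨x i, hx i⟩ ^ p) ^ p ^ (n - i)) := by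
    refine Finset.dvd_sum fun i _ => ?_
    obtain ⟨c, hc, hφc⟩ := hφ _ (hx i)
    have hdvd : (p : O) ∣ ⟨φ (x i), hφO (hx i)⟩ - ⟨x i, hx i⟩ ^ p :=
      ⟨⟨c, hc⟩, Subtype.ext (by push_cast; rw [hφc]; ring)⟩
    rw [show (p : O) ^ (n + 1) = p ^ (i : ℕ) * p ^ (n - i + 1) by rw [← pow_add]; congr 1; omega]
    exact mul_dvd_mul_left _ (dvd_sub_pow_of_dvd_sub hdvd _)
  have hc' := congrArg Subtype.val hc
  push_cast at hc'
  simp only [mul_sub, Finset.sum_sub_distrib, hφsum, ← hghost_succ, add_sub_cancel_left] at hc'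
  rw [(isUnit_of_invertible (p : K)).pow (n + 1) |>.mul_left_cancel hc']
  exact c.2

variable (p) (O : Subring K) {φ : K →+* K}

noncomputable def integralDworkLift (hφ : O.IsFrobeniusLift p φ) : O →+* WittVector p O :=
  have hmap (a : O) : map O.subtype (mk p fun n => ⟨_, dworkLift_coeff_mem O hφ a.2 n⟩) =
      dworkLift p φ a := by
    ext n
    rfl
  { toFun a := mk p fun n => ⟨_, dworkLift_coeff_mem O hφ a.2 n⟩
    map_one' := map_injective O.subtype Subtype.val_injective <| by
      rw [hmap, map_one, Subring.coe_one, map_one]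
    map_mul' a b := map_injective O.subtype Subtype.val_injective <| by
      rw [map_mul, hmap, hmap, hmap, Subring.coe_mul, map_mul]
    map_zero' := map_injective O.subtype Subtype.val_injective <| by
      rw [hmap, map_zero, Subring.coe_zero, map_zero]
    map_add' a b := map_injective O.subtype Subtype.val_injective <| by
      rw [map_add, hmap, hmap, hmap, Subring.coe_add, map_add] }

variable {p O}

theorem map_subtype_integralDworkLift (hφ : O.IsFrobeniusLift p φ) (a : O) :
    map O.subtype (integralDworkLift p O hφ a) = dworkLift p φ a := by
  ext n
  rfl

end DworkLift

end WittVector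

namespace VDFPaper

namespace ValuedField

variable {K : Type u} {Γ : Type v} {k : Type w}
  [Field K] [AddCommGroup Γ] [LinearOrder Γ] [IsOrderedAddMonoid Γ] [Field k]
  (M : ValuedField K Γ k)

theorem v_zero : M.v 0 = ⊤ := (M.v_top_iff 0).2 rfl

theorem v_one : M.v 1 = 0 := by
  obtain ⟨g, hg⟩ := WithTop.ne_top_iff_exists.1 fun h => one_ne_zero ((M.v_top_iff 1).1 h)
  have h := M.v_mul 1 1
  rw [one_mul, ← hg, ← WithTop.coe_add, WithTop.coe_inj] at h
  rw [← hg, left_eq_add.1 h, WithTop.coe_zero]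

def toAddValuation : AddValuation K (WithTop Γ) :=
  AddValuation.of M.v M.v_zero M.v_one M.v_add M.v_mul

theorem v_neg (a : K) : M.v (-a) = M.v a :=
  M.toAddValuation.map_neg a

def integers : Subring K where
  carrier := {x | 0 ≤ M.v x}
  mul_mem' {a b} (ha : 0 ≤ M.v a) (hb : 0 ≤ M.v b) := by
    rw [Set.mem_ofPred_eq, M.v_mul]
    exact add_nonneg ha hb
  one_mem' := (M.v_one).ge
  add_mem' {a b} ha hb := (le_min ha hb).trans (M.v_add a b)
  zero_mem' := show 0 ≤ M.v 0 from M.v_zero ▸ le_top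
  neg_mem' {a} (ha : 0 ≤ M.v a) := show 0 ≤ M.v (-a) from (M.v_neg a).symm ▸ ha

theorem mem_integers {x : K} : x ∈ M.integers ↔ 0 ≤ M.v x := Iff.rfl

def residue : M.integers →+* k where
  toFun a := M.π a
  map_one' := M.π_one
  map_mul' a b := M.π_mul a b a.2 b.2
  map_zero' := (M.π_eq_zero_iff 0 M.integers.zero_mem).2 (M.v_zero ▸ WithTop.coe_lt_top 0)
  map_add' a b := M.π_add a b a.2 b.2

theorem residue_apply (a : M.integers) : M.residue a = M.π a := rfl

theorem residue_eq_zero_iff (a : M.integers) : M.residue a = 0 ↔ 0 < M.v a :=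
  M.π_eq_zero_iff a a.2

theorem residue_surjective : Function.Surjective M.residue := by
  intro z
  obtain ⟨x, rfl⟩ := M.π_surj z
  by_cases hx : 0 ≤ M.v x
  · exact ⟨⟨x, hx⟩, rfl⟩
  · exact ⟨0, by rw [map_zero, M.π_junk x hx]⟩

theorem v_le_v_mul {y c : K} (hc : c ∈ M.integers) : M.v y ≤ M.v (y * c) := by
  rw [M.v_mul]
  exact le_add_of_nonneg_right hc

theorem exists_eq_mul_of_v_le {x y : K} (hy : y ≠ 0) (h : M.v y ≤ M.v x) :
    ∃ c ∈ M.integers, x = y * c := by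
  refine ⟨x / y, ?_, (mul_div_cancel₀ x hy).symm⟩
  rw [mem_integers]
  by_contra! hneg
  have hvy : M.v y ≠ ⊤ := fun h => hy ((M.v_top_iff y).1 h)
  have hlt : M.v x < M.v y := calc
    M.v x = M.v y + M.v (x / y) := by rw [← M.v_mul, mul_div_cancel₀ x hy]
    _ < M.v y + 0 := WithTop.add_lt_add_left hvy hneg
    _ = M.v y := add_zero _
  exact hlt.not_ge h

end ValuedField

theorem ValuedDiffField.v_iterate_σ {K : Type u} {Γ : Type v} {k : Type w}
    [Field K] [AddCommGroup Γ] [LinearOrder Γ] [IsOrderedAddMonoid Γ] [Field k]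
    (M : ValuedDiffField K Γ k) (n : ℕ) (x : K) : M.v ((⇑M.σ)^[n] x) = M.v x := by
  induction n with
  | zero => rfl
  | succ n ih => rw [Function.iterate_succ_apply', M.v_σ, ih]

namespace WittCase

open WittVector

variable {K : Type u} {Γ : Type v} {k : Type w}
  [Field K] [AddCommGroup Γ] [LinearOrder Γ] [IsOrderedAddMonoid Γ] [Field k]
  {M : ValuedDiffField K Γ k} {p : ℕ}

theorem natCast_ne_zero (hW : WittCase M p) : (p : K) ≠ 0 := by
  obtain ⟨-, -, -, -, ⟨e, -, -, hvp⟩, -⟩ := hW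
  intro h
  rw [h, M.v_zero] at hvp
  exact WithTop.top_ne_coe hvp

theorem charP (hW : WittCase M p) : CharP k p := by
  obtain ⟨-, -, hk, -⟩ := hW
  exact ringChar.of_eq hk

theorem exists_eq_natCast_mul (hW : WittCase M p) {x : K} (hx : 0 < M.v x) :
    ∃ c ∈ M.integers, x = p * c := by
  refine M.exists_eq_mul_of_v_le hW.natCast_ne_zero ?_
  obtain ⟨-, -, -, -, ⟨e, -, hmin, hvp⟩, -⟩ := hW
  rw [hvp]
  cases h : M.v x with
  | top => exact le_top
  | coe γ =>
    rw [h] at hx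
    exact WithTop.coe_le_coe.2 (hmin γ (WithTop.coe_pos.1 hx))

theorem natCast_dvd_of_residue_eq_zero (hW : WittCase M p) {x : M.integers}
    (hx : M.residue x = 0) : (p : M.integers) ∣ x := by
  obtain ⟨c, hc, hxc⟩ := hW.exists_eq_natCast_mul ((M.residue_eq_zero_iff x).1 hx)
  exact ⟨⟨c, hc⟩, Subtype.ext hxc⟩

theorem isFrobeniusLift (hW : WittCase M p) : M.integers.IsFrobeniusLift p M.σ := by
  intro x hx
  have hfrob : ∀ y : k, M.σr y = y ^ p := hW.2.2.2.2.2
  have hσx : M.σ x ∈ M.integers := (M.mem_integers).2 ((M.v_σ x).symm ▸ hx)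
  have hres : M.residue (⟨M.σ x, hσx⟩ - ⟨x, hx⟩ ^ p) = 0 := by
    rw [map_sub, map_pow, M.residue_apply, M.residue_apply, M.π_σ, hfrob, sub_self]
  obtain ⟨c, hc, h⟩ := hW.exists_eq_natCast_mul ((M.residue_eq_zero_iff _).1 hres)
  exact ⟨c, hc, by rw [RingEquiv.coe_toRingHom]; push_cast at h; linear_combination h⟩

variable [Fact p.Prime]

/-- The Witt coordinates `(∂₀ a, ∂₁ a, …)` of the paper, bundled as a ring homomorphism. -/
noncomputable def wittLift (hW : WittCase M p) : M.integers →+* WittVector p M.integers :=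
  letI := invertibleOfNonzero hW.natCast_ne_zero
  integralDworkLift p M.integers hW.isFrobeniusLift

theorem wittLift_coeff_zero (hW : WittCase M p) (a : M.integers) :
    (hW.wittLift a).coeff 0 = a :=
  letI := invertibleOfNonzero hW.natCast_ne_zero
  Subtype.ext (dworkLift_coeff_zero (p := p) (M.σ : K →+* K) a)

theorem ghostComponent_wittLift (hW : WittCase M p) (a : M.integers) (n : ℕ) :
    ((ghostComponent n (hW.wittLift a) : M.integers) : K) = (⇑M.σ)^[n] a := by
  let := invertibleOfNonzero hW.natCast_ne_zero
  rw [← M.integers.coe_subtype, ← ghostComponent_map, wittLift, map_subtype_integralDworkLift,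
    ghostComponent_dworkLift]
  rfl

theorem eq_wittLift_coeff (hW : WittCase M p) {a : M.integers} {x : ℕ → K}
    (hx : ∀ n, ∑ i ∈ Finset.range (n + 1), (p : K) ^ i * x i ^ p ^ (n - i) = (⇑M.σ)^[n] a)
    (i : ℕ) : x i = (hW.wittLift a).coeff i := by
  let := invertibleOfNonzero hW.natCast_ne_zero
  have h := (ghostComponent_eq_iff_eq_dworkLift (φ := (M.σ : K →+* K)) (w := mk p x)).1
    fun n => (ghostComponent_eq_sum (mk p x) n).trans (hx n)
  exact congrArg (coeff · i) h

noncomputable def residueWitt (hW : WittCase M p) : M.integers →+* WittVector p k :=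
  (map M.residue).comp hW.wittLift

theorem residueWitt_coeff (hW : WittCase M p) (a : M.integers) (n : ℕ) :
    (hW.residueWitt a).coeff n = M.π ((hW.wittLift a).coeff n) :=
  map_coeff _ _ _

theorem surjective_truncate_residueWitt (hW : WittCase M p) (n : ℕ) :
    Function.Surjective ((truncate n).comp hW.residueWitt) := by
  have := hW.charP
  have : PerfectField k := hW.2.2.2.1
  refine surjective_truncate_comp hW.residueWitt (fun y => ?_) n
  obtain ⟨a, rfl⟩ := M.residue_surjective y
  exact ⟨a, by simp only [residueWitt_coeff, wittLift_coeff_zero, M.residue_apply]⟩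

theorem truncate_residueWitt_eq_zero_iff (hW : WittCase M p) (a : M.integers) (n : ℕ) :
    truncate (n + 1) (hW.residueWitt a) = 0 ↔ ∃ b : M.integers, (a : K) = p ^ (n + 1) * b := by
  have := hW.charP
  rw [← RingHom.mem_ker, mem_ker_truncate]
  constructor
  · intro h
    obtain ⟨c, hc⟩ : (p : M.integers) ^ (n + 1) ∣ ghostComponent n (hW.wittLift a) :=
      pow_dvd_ghostComponent_of_dvd_coeff fun i hi =>
        hW.natCast_dvd_of_residue_eq_zero ((residueWitt_coeff hW a i).symm.trans (h i (by omega)))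
    have hv : M.v ((p : K) ^ (n + 1)) ≤ M.v a := by
      rw [← M.v_iterate_σ n (a : K), ← hW.ghostComponent_wittLift, hc]
      push_cast
      exact M.v_le_v_mul c.2
    obtain ⟨b, hb, hab⟩ := M.exists_eq_mul_of_v_le (pow_ne_zero _ hW.natCast_ne_zero) hv
    exact ⟨⟨b, hb⟩, hab⟩
  · rintro ⟨b, hab⟩ i hi
    have : a = b * (p : M.integers) ^ (n + 1) := Subtype.ext (by push_cast; rw [hab, mul_comm])
    rw [this, map_mul, map_pow, map_natCast, mul_pow_charP_coeff_zero _ hi]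

end WittCase

/-- Lemma 4.1/4.2: in the Witt case there is a unique sequence of operators
`∂₀, ∂₁, … : O → O` with `∂₀ = id` and `σⁿ a = Wₙ(∂₀ a, …, ∂ₙ a)`, and
`a ↦ (∂₀(a)‾, …, ∂ₙ(a)‾)` is a surjective ring morphism from `O` onto the
truncated Witt vectors `W[k]/(p^{n+1})` with kernel `p^{n+1} O`. -/
theorem stmt5 {K : Type u} {Γ : Type v} {k : Type w}
    [Field K] [AddCommGroup Γ] [LinearOrder Γ] [IsOrderedAddMonoid Γ] [Field k]
    (M : ValuedDiffField K Γ k) (p : ℕ) [Fact p.Prime] (hW : WittCase M p) :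
    ∃ del : ℕ → {x : K // 0 ≤ M.v x} → {x : K // 0 ≤ M.v x},
      (∀ a, del 0 a = a) ∧
      (∀ (a : {x : K // 0 ≤ M.v x}) (n : ℕ),
        (⇑M.σ)^[n] (a : K) =
          ∑ i ∈ Finset.range (n + 1), (p : K) ^ i * ((del i a : K)) ^ p ^ (n - i)) ∧
      (∀ del' : ℕ → {x : K // 0 ≤ M.v x} → {x : K // 0 ≤ M.v x},
        (∀ a, del' 0 a = a) →
        (∀ (a : {x : K // 0 ≤ M.v x}) (n : ℕ),
          (⇑M.σ)^[n] (a : K) =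
            ∑ i ∈ Finset.range (n + 1), (p : K) ^ i * ((del' i a : K)) ^ p ^ (n - i)) →
        del' = del) ∧
      (∀ n : ℕ, ∃ ψ : {x : K // 0 ≤ M.v x} → TruncatedWittVector p (n + 1) k,
        (∀ a, ψ a = TruncatedWittVector.mk p fun i : Fin (n + 1) => M.π ((del (i : ℕ) a : K))) ∧
        (∀ a b c : {x : K // 0 ≤ M.v x}, (a : K) = (b : K) + (c : K) → ψ a = ψ b + ψ c) ∧
        (∀ a b c : {x : K // 0 ≤ M.v x}, (a : K) = (b : K) * (c : K) → ψ a = ψ b * ψ c) ∧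
        (∀ a : {x : K // 0 ≤ M.v x}, (a : K) = 1 → ψ a = 1) ∧
        Function.Surjective ψ ∧
        (∀ a : {x : K // 0 ≤ M.v x},
          ψ a = 0 ↔ ∃ b : {x : K // 0 ≤ M.v x}, (a : K) = (p : K) ^ (n + 1) * (b : K))) := by
  refine ⟨fun n a => (hW.wittLift a).coeff n, hW.wittLift_coeff_zero, fun a n => ?_,
    fun del' _ hdel' => ?_, fun n => ⟨(WittVector.truncate (n + 1)).comp hW.residueWitt,
      fun (a : M.integers) => ?_, fun (a b c : M.integers) h => ?_,
      fun (a b c : M.integers) h => ?_, fun (a : M.integers) h => ?_,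
      hW.surjective_truncate_residueWitt _, hW.truncate_residueWitt_eq_zero_iff (n := n)⟩⟩
  · rw [← hW.ghostComponent_wittLift a n, WittVector.ghostComponent_eq_sum]
    push_cast
    rfl
  · funext n a
    exact Subtype.ext (hW.eq_wittLift_coeff (fun m => (hdel' a m).symm) n)
  · ext i
    rw [RingHom.comp_apply, WittVector.coeff_truncate, TruncatedWittVector.coeff_mk,
      hW.residueWitt_coeff]
  · rw [show a = b + c from Subtype.ext h, map_add]
  · rw [show a = b * c from Subtype.ext h, map_mul]
  · rw [show a = 1 from Subtype.ext h, map_one]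

end VDFPaper
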